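/- For every nonnegative integer m, ∑_{i=1}^{m+1} (−1)^{i−1}·c_{m,i} = δ_{m,0}, where c_{m,i} denotes the coefficient of t^{m+1−i} in f_{m,i}(t) and δ_{m,0} is 1 if m = 0 and 0 otherwise. -/

import Mathlib

/-!
Comparing coefficients of `t^{m+1-i}` in the recursion, and using `deg f_{m,i} ≤ m + 1 - i`
(which kills the terms `t·f'_{m,i+1}` and `1·f_{m,i+1}` in that degree), gives
`c_{m+1,i+1} = -(i+1) c_{m,i+1} - i c_{m,i}`. So `(-1)^i c_{m+1,i+1} = T(i+1) - T(i)` with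
`T(j) = (-1)^j j c_{m,j}`, and the alternating sum telescopes to `T(m+2) - T(0) = 0`.
-/

open Polynomial PowerSeries

/-- The polynomials `f_{m,i}(t)` defined recursively. -/
noncomputable def fmi : ℕ → ℕ → Polynomial ℚ
  | 0, 0 => Polynomial.C (1/2) * Polynomial.X - 1
  | 0, 1 => 1
  | 0, _ + 2 => 0
  | m + 1, 0 => Polynomial.X * Polynomial.derivative (fmi m 0)
  | m + 1, i + 1 =>
    if i = m + 1 then -((m : ℚ) + 1) • fmi m (m + 1)
    else if i + 1 ≤ m + 1 then
      Polynomial.X * Polynomial.derivative (fmi m (i + 1))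
        + Polynomial.C ((i : ℚ) + 1) * (1 - Polynomial.X) * fmi m (i + 1)
        - Polynomial.C (i : ℚ) * fmi m i
    else 0

lemma fmi_eq_zero_of_lt {m i : ℕ} (h : m + 1 < i) : fmi m i = 0 := by
  obtain ⟨k, rfl⟩ : ∃ k, i = k + 1 := ⟨i - 1, by omega⟩
  cases m with
  | zero => obtain ⟨j, rfl⟩ : ∃ j, k = j + 1 := ⟨k - 1, by omega⟩; rfl
  | succ m => rw [fmi, if_neg (by omega), if_neg (by omega)]

lemma fmi_succ_top (m : ℕ) : fmi (m + 1) (m + 2) = -((m : ℚ) + 1) • fmi m (m + 1) := by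
  rw [fmi, if_pos rfl]

lemma coeff_fmi_succ_zero (m n : ℕ) :
    (fmi (m + 1) 0).coeff (n + 1) = (n + 1) * (fmi m 0).coeff (n + 1) := by
  rw [fmi, Polynomial.coeff_X_mul, Polynomial.coeff_derivative, mul_comm]

lemma coeff_fmi_succ_succ {m i : ℕ} (hi : i ≤ m) (n : ℕ) :
    (fmi (m + 1) (i + 1)).coeff (n + 1)
      = (n + i + 2) * (fmi m (i + 1)).coeff (n + 1) - (i + 1) * (fmi m (i + 1)).coeff n
        - i * (fmi m i).coeff (n + 1) := by
  rw [fmi, if_neg (by omega), if_pos (by omega), mul_one_sub, sub_mul]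
  simp only [Polynomial.coeff_add, Polynomial.coeff_sub, Polynomial.coeff_X_mul,
    Polynomial.coeff_derivative, Polynomial.coeff_C_mul, mul_assoc]
  ring

lemma coeff_fmi_eq_zero_of_lt {m i n : ℕ} (h : m + 1 < n + i) : (fmi m i).coeff n = 0 := by
  induction m generalizing i n with
  | zero =>
    match i with
    | 0 => simp [fmi, Polynomial.coeff_X, Polynomial.coeff_one, show n ≠ 0 by omega,
      show 1 ≠ n by omega]
    | 1 => simp [fmi, Polynomial.coeff_one, show n ≠ 0 by omega]
    | _ + 2 => simp [fmi]
  | succ m ih =>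
    rcases lt_or_ge (m + 2) i with hi | hi
    · rw [fmi_eq_zero_of_lt hi, Polynomial.coeff_zero]
    obtain ⟨k, rfl⟩ : ∃ k, n = k + 1 := ⟨n - 1, by omega⟩
    cases i with
    | zero => rw [coeff_fmi_succ_zero, ih (by omega), mul_zero]
    | succ i =>
      rcases Nat.lt_or_ge m i with him | him
      · obtain rfl : i = m + 1 := by omega
        rw [fmi_succ_top, Polynomial.coeff_smul, ih (by omega), smul_zero]
      · rw [coeff_fmi_succ_succ him, ih (by omega), ih (by omega), ih (by omega)]
        ring

-- For `i > m + 1` the exponent `m + 1 - i` truncates to `0`.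
noncomputable def cmi (m i : ℕ) : ℚ := (fmi m i).coeff (m + 1 - i)

lemma cmi_eq_zero_of_lt {m i : ℕ} (h : m + 1 < i) : cmi m i = 0 := by
  rw [cmi, fmi_eq_zero_of_lt h, Polynomial.coeff_zero]

lemma cmi_succ_succ {m i : ℕ} (hi : i ≤ m + 1) :
    cmi (m + 1) (i + 1) = -(i + 1) * cmi m (i + 1) - i * cmi m i := by
  rcases Nat.lt_or_ge m i with him | him
  · obtain rfl : i = m + 1 := by omega
    rw [cmi_eq_zero_of_lt (m := m) (by omega), cmi, cmi, Nat.sub_self, Nat.sub_self, fmi_succ_top,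
      Polynomial.coeff_smul, smul_eq_mul]
    push_cast; ring
  · obtain ⟨k, rfl⟩ : ∃ k, m = i + k := ⟨m - i, by omega⟩
    rw [cmi, cmi, cmi, show i + k + 1 + 1 - (i + 1) = k + 1 by omega,
      show i + k + 1 - (i + 1) = k by omega, show i + k + 1 - i = k + 1 by omega,
      coeff_fmi_succ_succ him, coeff_fmi_eq_zero_of_lt (by omega)]
    ring

theorem sum_cmi_eq_delta (m : ℕ) :
    ∑ i ∈ Finset.Icc 1 (m + 1), (-1 : ℚ) ^ (i - 1) * (fmi m i).coeff (m + 1 - i)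
      = if m = 0 then 1 else 0 := by
  cases m with
  | zero => simp [fmi]
  | succ m =>
    let T (j : ℕ) : ℚ := (-1) ^ j * j * cmi m j
    have telescope (k : ℕ) (hk : k ∈ Finset.range (m + 2)) :
        (-1 : ℚ) ^ (1 + k - 1) * (fmi (m + 1) (1 + k)).coeff (m + 1 + 1 - (1 + k))
          = T (k + 1) - T k := by
      rw [add_comm 1 k, Nat.add_sub_cancel, ← cmi,
        cmi_succ_succ (Nat.lt_succ_iff.mp (Finset.mem_range.mp hk))]
      simp only [T, pow_succ]
      push_cast; ring
    rw [if_neg m.succ_ne_zero, ← Finset.Ico_add_one_right_eq_Icc, Finset.sum_Ico_eq_sum_range,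
      Nat.add_sub_cancel, Finset.sum_congr rfl telescope, Finset.sum_range_sub]
    simp [T, cmi_eq_zero_of_lt]
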